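/- arXiv:1302.1407 — 2 statements merged into one kernel-verified Lean document; each statement's English description precedes it below -/
import Mathlib

section
/- Let K ⊂ ℝⁿ be a compact convex o-symmetric body with nonempty interior, Λ ⊂ ℝⁿ a full-rank lattice, and Λ̄ ⊊ Λ a full-rank sublattice. Let m ∈ ℕ satisfy m · det Λ < det Λ̄. If vol((½K + Λ̄) ∩ P) ≥ m · det Λ, where P is a fundamental parallelepiped of Λ̄, then K contains at least m + 1 lattice points of Λ lying in pairwise different cosets of Λ modulo Λ̄. -/
open MeasureTheory Set Pointwise

/-- The lattice generated by the vectors `b`. -/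
noncomputable def lat {n : ℕ} (b : Fin n → (Fin n → ℝ)) : Set (Fin n → ℝ) :=
  (Submodule.span ℤ (Set.range b) : Submodule ℤ (Fin n → ℝ))

/-- The determinant (covolume) of the lattice with basis `b`. -/
noncomputable def latDet {n : ℕ} (b : Fin n → (Fin n → ℝ)) : ℝ :=
  |(Matrix.of b).det|

/-- A compact convex `o`-symmetric body with nonempty interior. -/
def IsBody {n : ℕ} (K : Set (Fin n → ℝ)) : Prop :=
  IsCompact K ∧ Convex ℝ K ∧ K = -K ∧ (interior K).Nonempty

/-- First successive minimum of `K` w.r.t. the point set `S`. -/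
noncomputable def lambda1 {n : ℕ} (K S : Set (Fin n → ℝ)) : ℝ :=
  sInf {l : ℝ | 0 ≤ l ∧ ∃ x ∈ S, x ≠ 0 ∧ x ∈ l • K}

/-- First restricted successive minimum: smallest `l ≥ 0` with `l • K ∩ S ≠ ∅`. -/
noncomputable def lambdaRes {n : ℕ} (K S : Set (Fin n → ℝ)) : ℝ :=
  sInf {l : ℝ | 0 ≤ l ∧ (l • K ∩ S).Nonempty}

/-- `i`-th successive minimum of `K` w.r.t. the point set `S`. -/
noncomputable def lambdaI {n : ℕ} (i : ℕ) (K S : Set (Fin n → ℝ)) : ℝ :=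
  sInf {l : ℝ | 0 ≤ l ∧ i ≤ Module.finrank ℝ (Submodule.span ℝ (l • K ∩ S))}

/-- The (half-open) fundamental parallelepiped of the basis `b`. -/
noncomputable def fundPar {n : ℕ} (b : Fin n → (Fin n → ℝ)) : Set (Fin n → ℝ) :=
  {x | ∃ ρ : Fin n → ℝ, (∀ i, 0 ≤ ρ i ∧ ρ i < 1) ∧ x = ∑ i, ρ i • b i}

/-- The covering radius of `K` with respect to the point set `L`. -/
noncomputable def covRadius {n : ℕ} (K L : Set (Fin n → ℝ)) : ℝ :=
  sInf {μ : ℝ | 0 < μ ∧ ∀ t : Fin n → ℝ, (({t} + μ • K) ∩ L).Nonempty}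

/-!
Put `C = ½K + Λ̄`, a closed `Λ̄`-periodic set, and count for each `x` the cosets `v + Λ̄` of
`Λ / Λ̄` with `x ∈ v + C`. Over a fundamental domain `P` of `Λ̄` this count has mean
`[Λ : Λ̄] vol (C ∩ P) / vol P ≥ m`. If it never exceeded `m`, it would equal `m` almost
everywhere, hence everywhere, because it is `Λ̄`-periodic and `{count ≥ m}` is closed. But at a
boundary point of `C` the zero coset is counted on top of the `m` cosets that cover the nearby
points outside `C`. So some `x` lies in `m + 1` sets `vᵢ + ½kᵢ + Λ̄`, and the differences
`½kᵢ - ½kⱼ` with `j` fixed are points of `K ∩ Λ` in pairwise different cosets.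
-/

open Submodule
open scoped ENNReal

theorem add_mem_add_addSubgroup_iff {E : Type*} [AddGroup E] {s : Set E} {G : AddSubgroup E}
    {g : E} (hg : g ∈ G) (x : E) : x + g ∈ s + (G : Set E) ↔ x ∈ s + (G : Set E) := by
  suffices h : ∀ g ∈ G, ∀ x ∈ s + (G : Set E), x + g ∈ s + (G : Set E) from
    ⟨fun hx => by simpa using h (-g) (neg_mem hg) _ hx, h g hg x⟩
  rintro g hg _ ⟨a, ha, h, hh, rfl⟩
  exact ⟨a, ha, h + g, add_mem hh hg, (add_assoc a h g).symm⟩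

theorem sub_mem_of_mem_half_smul {E : Type*} [AddCommGroup E] [Module ℝ E] {K : Set E}
    (hK_convex : Convex ℝ K) (hK_symm : K = -K) {y z : E} (hy : y ∈ (2⁻¹ : ℝ) • K)
    (hz : z ∈ (2⁻¹ : ℝ) • K) : y - z ∈ K := by
  have hz' : -z ∈ (2⁻¹ : ℝ) • K := by
    rw [hK_symm, Set.smul_set_neg, Set.mem_neg, neg_neg]
    exact hz
  have := Set.add_mem_add hy hz'
  rwa [← hK_convex.add_smul (by norm_num) (by norm_num), show (2⁻¹ + 2⁻¹ : ℝ) = 1 by norm_num,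
    one_smul, ← sub_eq_add_neg] at this

section CoverCount

variable {X E ι : Type*}

open scoped Classical in
theorem isClosed_setOf_le_card_filter_mem [TopologicalSpace X] (s : Finset ι) {F : ι → Set X}
    (hF : ∀ i ∈ s, IsClosed (F i)) (k : ℕ) :
    IsClosed {x | k ≤ (s.filter fun i => x ∈ F i).card} := by
  have h : {x | k ≤ (s.filter fun i => x ∈ F i).card} =
      ⋃ t ∈ s.powersetCard k, ⋂ i ∈ t, F i := by
    ext x
    simp only [Set.mem_ofPred_eq, Set.mem_iUnion, Set.mem_iInter, Finset.mem_powersetCard,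
      exists_prop]
    constructor
    · intro hx
      obtain ⟨t, hts, rfl⟩ := Finset.exists_subset_card_eq hx
      exact ⟨t, ⟨hts.trans (Finset.filter_subset _ _), rfl⟩,
        fun i hi => (Finset.mem_filter.mp (hts hi)).2⟩
    · rintro ⟨t, ⟨hts, rfl⟩, hxt⟩
      exact Finset.card_le_card fun i hi => Finset.mem_filter.mpr ⟨hts hi, hxt i hi⟩
  rw [h]
  exact (s.powersetCard k).finite_toSet.isClosed_biUnion fun t ht =>
    isClosed_biInter fun i hi => hF i ((Finset.mem_powersetCard.mp ht).1 hi)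

variable [Fintype ι]

open scoped Classical in
noncomputable def coverCount [AddGroup E] (C : Set E) (v : ι → E) (x : E) : ℕ :=
  (Finset.univ.filter fun i => x - v i ∈ C).card

variable [AddCommGroup E] {C : Set E} {G : AddSubgroup E}

theorem coverCount_add_of_mem (hC_inv : ∀ g ∈ G, ∀ x, x + g ∈ C ↔ x ∈ C) (v : ι → E)
    {g : E} (hg : g ∈ G) (x : E) : coverCount C v (x + g) = coverCount C v x := by
  have h : ∀ i, x + g - v i ∈ C ↔ x - v i ∈ C := fun i => by rw [add_sub_right_comm, hC_inv g hg]
  classical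
  unfold coverCount
  rw [Finset.filter_congr fun i _ => h i]

theorem isClosed_setOf_le_coverCount [TopologicalSpace E] [IsTopologicalAddGroup E]
    (hC : IsClosed C) (v : ι → E) (k : ℕ) : IsClosed {x | k ≤ coverCount C v x} :=
  isClosed_setOf_le_card_filter_mem _ (fun i _ => hC.preimage (continuous_sub_right (v i))) k

theorem lt_coverCount_of_mem_closure_compl [TopologicalSpace E] [IsTopologicalAddGroup E]
    (hC : IsClosed C) (hC_inv : ∀ g ∈ G, ∀ x, x + g ∈ C ↔ x ∈ C) {v : ι → E} {i₀ : ι}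
    (hi₀ : v i₀ ∈ G) {m : ℕ} (hm : ∀ y ∉ C, m ≤ coverCount C v y) {x : E} (hxC : x ∈ C)
    (hx : x ∈ closure Cᶜ) : m < coverCount C v x := by
  classical
  set s := Finset.univ.filter fun i => v i ∉ G
  -- Off `C` only the translates by `v i ∉ G` can contain a point; pass to the limit at `x`.
  have hclosed : IsClosed {y | m ≤ (s.filter fun i => y - v i ∈ C).card} :=
    isClosed_setOf_le_card_filter_mem s (fun i _ => hC.preimage (continuous_sub_right (v i))) m
  have hcompl : Cᶜ ⊆ {y | m ≤ (s.filter fun i => y - v i ∈ C).card} := by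
    intro y hy
    refine (hm y hy).trans (Finset.card_le_card fun i hi => ?_)
    simp only [s, Finset.mem_filter, Finset.mem_univ, true_and] at hi ⊢
    refine ⟨fun hvi => hy ?_, hi⟩
    simpa using (hC_inv _ hvi (y - v i)).mpr hi
  have hsub : s.filter (fun i => x - v i ∈ C) ⊂ Finset.univ.filter fun i => x - v i ∈ C := by
    refine Finset.ssubset_iff_of_subset (fun i hi => ?_) |>.mpr ⟨i₀, ?_, ?_⟩
    · simp only [s, Finset.mem_filter, Finset.mem_univ, true_and] at hi ⊢
      exact hi.2
    · simpa [sub_eq_add_neg] using (hC_inv _ (neg_mem hi₀) x).mpr hxC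
    · simp [s, hi₀]
  exact (closure_minimal hcompl hclosed hx).trans_lt (Finset.card_lt_card hsub)

end CoverCount

namespace MeasureTheory.IsAddFundamentalDomain

variable {E ι : Type*} [Fintype ι] [AddCommGroup E] [MeasurableSpace E] {μ : Measure E}
  {G : AddSubgroup E} [Countable G] {P C : Set E}

theorem measure_vadd_inter [MeasurableAdd E] [μ.IsAddLeftInvariant]
    (hP : IsAddFundamentalDomain G P μ) (hC : MeasurableSet C)
    (hC_inv : ∀ g ∈ G, ∀ x, x + g ∈ C ↔ x ∈ C) (a : E) : μ ((a +ᵥ C) ∩ P) = μ (C ∩ P) := by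
  have hC_inv' : ∀ g : G, (fun x => g +ᵥ x) ⁻¹' C = C := fun g => by
    ext x
    simp only [Set.mem_preimage, AddSubgroup.vadd_def, vadd_eq_add, add_comm (g : E) x]
    exact hC_inv g g.2 x
  calc μ ((a +ᵥ C) ∩ P) = μ (a +ᵥ (C ∩ (-a +ᵥ P))) := by rw [Set.vadd_set_inter, vadd_neg_vadd]
    _ = μ (C ∩ (-a +ᵥ P)) := measure_vadd μ a _
    _ = μ (C ∩ P) := (hP.measure_set_eq (hP.vadd_of_comm (-a)) hC hC_inv').symm

theorem setLIntegral_coverCount [MeasurableAdd E] [μ.IsAddLeftInvariant]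
    (hP : IsAddFundamentalDomain G P μ) (hC : MeasurableSet C)
    (hC_inv : ∀ g ∈ G, ∀ x, x + g ∈ C ↔ x ∈ C) (v : ι → E) :
    ∫⁻ x in P, (coverCount C v x : ℝ≥0∞) ∂μ = Fintype.card ι * μ (C ∩ P) := by
  classical
  have h_sum : ∀ x, (coverCount C v x : ℝ≥0∞) = ∑ i, (v i +ᵥ C).indicator 1 x := by
    intro x
    rw [coverCount, Finset.card_filter]
    push_cast
    refine Finset.sum_congr rfl fun i _ => ?_
    simp [Set.indicator, Set.mem_vadd_set_iff_neg_vadd_mem, neg_add_eq_sub]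
  have h_meas : ∀ i, MeasurableSet (v i +ᵥ C) := fun i => hC.const_vadd (v i)
  simp_rw [h_sum]
  rw [lintegral_finsetSum _ fun i _ => measurable_one.indicator (h_meas i)]
  simp_rw [lintegral_indicator_one (h_meas _), Measure.restrict_apply (h_meas _),
    hP.measure_vadd_inter hC hC_inv]
  simp

theorem eq_of_forall_le_of_le_setLIntegral [TopologicalSpace E]
    [OpensMeasurableSpace E] [μ.IsOpenPosMeasure] [MeasurableAdd E] [VAddInvariantMeasure G E μ]
    (hP : IsAddFundamentalDomain G P μ) (hP_fin : μ P ≠ ∞) {f : E → ℕ} {m : ℕ}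
    (hf_closed : IsClosed {x | m ≤ f x}) (hf_inv : ∀ g ∈ G, ∀ x, f (x + g) = f x)
    (hle : ∀ x, f x ≤ m) (hint : m * μ P ≤ ∫⁻ x in P, (f x : ℝ≥0∞) ∂μ) : ∀ x, f x = m := by
  have hle' : ∫⁻ x in P, (f x : ℝ≥0∞) ∂μ ≤ m * μ P := by
    rw [← setLIntegral_const]
    exact lintegral_mono fun x => Nat.cast_le.mpr (hle x)
  have hae : ∀ᵐ x ∂μ.restrict P, (f x : ℝ≥0∞) = m :=
    ae_eq_of_ae_le_of_lintegral_le (ae_of_all _ fun x => Nat.cast_le.mpr (hle x))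
      (ne_top_of_le_ne_top (ENNReal.mul_ne_top (by simp) hP_fin) hle') aemeasurable_const
      (by rwa [setLIntegral_const])
  set S := {x | m ≤ f x}ᶜ
  have hSP : μ (S ∩ P) = 0 := by
    rw [← Measure.restrict_apply hf_closed.isOpen_compl.measurableSet]
    refine measure_mono_null (fun x hx => ?_) (ae_iff.mp hae)
    simp only [Set.mem_compl_iff, Set.mem_ofPred_eq, not_le] at hx
    simp only [Set.mem_ofPred_eq]
    exact_mod_cast hx.ne
  have hS_inv : ∀ g : G, g +ᵥ S = S := fun g => by
    ext x
    simp only [S, Set.mem_vadd_set_iff_neg_vadd_mem, Set.mem_compl_iff, Set.mem_ofPred_eq]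
    rw [AddSubgroup.vadd_def, vadd_eq_add, AddSubgroup.coe_neg, add_comm, hf_inv _ (neg_mem g.2)]
  have hS : S = ∅ :=
    (hf_closed.isOpen_compl.measure_eq_zero_iff μ).mp (hP.measure_zero_of_invariant S hS_inv hSP)
  intro x
  refine le_antisymm (hle x) (by_contra fun hx => ?_)
  exact (Set.eq_empty_iff_forall_notMem.mp hS x) hx

end MeasureTheory.IsAddFundamentalDomain

theorem exists_lt_coverCount {E ι : Type*} [Fintype ι] [AddCommGroup E] [TopologicalSpace E]
    [IsTopologicalAddGroup E] [PreconnectedSpace E] [MeasurableSpace E] [BorelSpace E]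
    {μ : Measure E} [μ.IsAddLeftInvariant] [μ.IsOpenPosMeasure]
    {G : AddSubgroup E} [Countable G] {P C : Set E} (hP : IsAddFundamentalDomain G P μ)
    (hP_fin : μ P ≠ ∞) (hC : IsClosed C) (hC_ne : C.Nonempty)
    (hC_inv : ∀ g ∈ G, ∀ x, x + g ∈ C ↔ x ∈ C) {v : ι → E} {i₀ : ι} (hi₀ : v i₀ ∈ G) {m : ℕ}
    (hm : m < Fintype.card ι) (hvol : m * μ P ≤ Fintype.card ι * μ (C ∩ P)) :
    ∃ x, m < coverCount C v x := by
  by_contra! hle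
  have h_eq := hP.eq_of_forall_le_of_le_setLIntegral hP_fin (isClosed_setOf_le_coverCount hC v m)
    (fun g hg => coverCount_add_of_mem hC_inv v hg) hle
    (hvol.trans (hP.setLIntegral_coverCount hC.measurableSet hC_inv v).ge)
  have hC_univ : C ≠ univ := by
    rintro rfl
    exact (hle hC_ne.some).not_gt (by simpa [coverCount] using hm)
  obtain ⟨x, hxC, hx⟩ : (closure C ∩ closure Cᶜ).Nonempty := by
    rw [← frontier_eq_closure_inter_closure]
    exact nonempty_frontier_iff.mpr ⟨hC_ne, hC_univ⟩
  rw [hC.closure_eq] at hxC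
  exact (hle x).not_gt
    (lt_coverCount_of_mem_closure_compl hC hC_inv hi₀ (fun y _ => (h_eq y).ge) hxC hx)

theorem exists_finset_subset_of_sub_mem_half_smul_add {E ι : Type*} [AddCommGroup E]
    [Module ℝ E] {K : Set E} (hK_convex : Convex ℝ K) (hK_symm : K = -K) {G H : AddSubgroup E}
    (hGH : G ≤ H) {v : ι → E} (hvH : ∀ i, v i ∈ H) (hv : ∀ i j, v i - v j ∈ G → i = j) {x : E}
    {s : Finset ι} (hs : s.Nonempty) (hx : ∀ i ∈ s, x - v i ∈ (2⁻¹ : ℝ) • K + (G : Set E)) :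
    ∃ T : Finset E, (T : Set E) ⊆ K ∩ H ∧ T.card = s.card ∧
      ∀ y ∈ T, ∀ z ∈ T, y ≠ z → y - z ∉ G := by
  classical
  choose! y hy l hl hyl using fun i hi => Set.mem_add.mp (hx i hi)
  obtain ⟨i₀, hi₀⟩ := hs
  have h_diff : ∀ i ∈ s, ∀ j ∈ s, y i - y j = (v j - v i) + (l j - l i) := fun i hi j hj => by
    rw [eq_sub_of_add_eq (hyl i hi), eq_sub_of_add_eq (hyl j hj)]
    abel
  have h_diff_mem : ∀ i ∈ s, ∀ j ∈ s, y i - y j ∈ H := fun i hi j hj => by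
    rw [h_diff i hi j hj]
    exact add_mem (sub_mem (hvH j) (hvH i)) (hGH (sub_mem (hl j hj) (hl i hi)))
  have h_eq_of_diff_mem : ∀ i ∈ s, ∀ j ∈ s, y i - y j ∈ G → i = j := fun i hi j hj h => by
    rw [h_diff i hi j hj] at h
    exact (hv j i (by simpa using sub_mem h (sub_mem (hl j hj) (hl i hi)))).symm
  have h_inj : Set.InjOn (fun i => y i - y i₀) s := fun i hi j hj hij =>
    h_eq_of_diff_mem i hi j hj (by rw [sub_left_inj.mp hij, sub_self]; exact zero_mem G)
  refine ⟨s.image fun i => y i - y i₀, ?_, Finset.card_image_of_injOn h_inj, ?_⟩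
  · intro z hz
    obtain ⟨i, hi, rfl⟩ := Finset.mem_image.mp hz
    exact ⟨sub_mem_of_mem_half_smul hK_convex hK_symm (hy i hi) (hy i₀ hi₀),
      h_diff_mem i hi i₀ hi₀⟩
  · simp only [Finset.mem_image]
    rintro _ ⟨i, hi, rfl⟩ _ ⟨j, hj, rfl⟩ hne hG
    rw [sub_sub_sub_cancel_right] at hG
    exact hne (by rw [h_eq_of_diff_mem i hi j hj hG])

theorem exists_finset_card_gt_of_mul_measure_le {E : Type*} [AddCommGroup E] [Module ℝ E]
    [TopologicalSpace E] [IsTopologicalAddGroup E] [ContinuousSMul ℝ E] [PreconnectedSpace E]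
    [MeasurableSpace E] [BorelSpace E] {μ : Measure E} [μ.IsAddLeftInvariant]
    [μ.IsOpenPosMeasure] {Λ Λ' : AddSubgroup E} (hΛ : Λ' ≤ Λ) [Countable Λ']
    (hΛ'_closed : IsClosed (Λ' : Set E)) {P : Set E} (hP : IsAddFundamentalDomain Λ' P μ)
    (hP_fin : μ P ≠ ∞) {K : Set E} (hK_compact : IsCompact K) (hK_convex : Convex ℝ K)
    (hK_symm : K = -K) (hK_ne : K.Nonempty) {m : ℕ} (hm : m < Λ'.relIndex Λ)
    (hvol : m * μ P ≤ Λ'.relIndex Λ * μ (((2⁻¹ : ℝ) • K + (Λ' : Set E)) ∩ P)) :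
    ∃ T : Finset E, (T : Set E) ⊆ K ∩ Λ ∧ m < T.card ∧ ∀ x ∈ T, ∀ y ∈ T, x ≠ y → x - y ∉ Λ' := by
  classical
  let Q := Λ ⧸ Λ'.addSubgroupOf Λ
  have : Finite Q := AddSubgroup.index_ne_zero_iff_finite.mp (Nat.ne_zero_of_lt hm)
  have := Fintype.ofFinite Q
  have h_card : Fintype.card Q = Λ'.relIndex Λ := Fintype.card_eq_nat_card
  have h_out_zero : ((0 : Q).out : E) ∈ Λ' := AddSubgroup.mem_addSubgroupOf.mp
    ((QuotientAddGroup.eq_zero_iff _).mp (QuotientAddGroup.out_eq' 0))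
  have h_out_inj : ∀ q q' : Q, (q.out : E) - q'.out ∈ Λ' → q = q' := fun q q' h => by
    rw [← QuotientAddGroup.out_eq' q, ← QuotientAddGroup.out_eq' q', QuotientAddGroup.eq,
      AddSubgroup.mem_addSubgroupOf, AddSubgroup.coe_add, AddSubgroup.coe_neg, neg_add_eq_sub,
      ← neg_sub]
    exact neg_mem h
  obtain ⟨x, hx⟩ := exists_lt_coverCount hP hP_fin
    (hΛ'_closed.vadd_left_of_isCompact (hK_compact.smul _)) (hK_ne.smul_set.add ⟨0, zero_mem Λ'⟩)
    (fun g hg => add_mem_add_addSubgroup_iff hg) (v := fun q : Q => (q.out : E)) h_out_zero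
    (h_card ▸ hm) (h_card ▸ hvol)
  unfold coverCount at hx
  obtain ⟨T, hT, hT_card, hT_cosets⟩ := exists_finset_subset_of_sub_mem_half_smul_add hK_convex
    hK_symm hΛ (fun q => q.out.2) h_out_inj (Finset.card_pos.mp (Nat.zero_lt_of_lt hx))
    fun q hq => (Finset.mem_filter.mp hq).2
  exact ⟨T, hT, hT_card ▸ hx, hT_cosets⟩

section Lattice

variable {n : ℕ}

theorem exists_basis_coe_eq {b : Fin n → Fin n → ℝ} (hb : LinearIndependent ℝ b) :
    ∃ B : Module.Basis (Fin n) ℝ (Fin n → ℝ), ⇑B = b :=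
  ⟨basisOfLinearIndependentOfCardEqFinrank' b hb (by simp),
    coe_basisOfLinearIndependentOfCardEqFinrank' b hb _⟩

theorem fundPar_eq_fundamentalDomain (B : Module.Basis (Fin n) ℝ (Fin n → ℝ)) :
    fundPar B = ZSpan.fundamentalDomain B := by
  ext x
  simp only [fundPar, ZSpan.fundamentalDomain, Set.mem_ofPred_eq]
  constructor
  · rintro ⟨ρ, hρ, rfl⟩ i
    rw [Module.Basis.repr_sum_self]
    exact hρ i
  · intro hx
    exact ⟨B.repr x, hx, (B.sum_repr x).symm⟩

theorem covolume_span_eq_latDet (B : Module.Basis (Fin n) ℝ (Fin n → ℝ)) :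
    ZLattice.covolume (span ℤ (range B)) = latDet B := by
  rw [ZLattice.covolume_eq_measure_fundamentalDomain _ _ (ZSpan.isAddFundamentalDomain B volume),
    ZSpan.volume_real_fundamentalDomain, latDet]

theorem latDet_pos (B : Module.Basis (Fin n) ℝ (Fin n → ℝ)) : 0 < latDet B :=
  covolume_span_eq_latDet B ▸ ZLattice.covolume_pos (span ℤ (range B))

theorem relIndex_mul_latDet {B B' : Module.Basis (Fin n) ℝ (Fin n → ℝ)}
    (h : span ℤ (range B') ≤ span ℤ (range B)) :
    ((span ℤ (range B')).toAddSubgroup.relIndex (span ℤ (range B)).toAddSubgroup : ℝ) * latDet B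
      = latDet B' := by
  rw [← ZLattice.covolume_div_covolume_eq_relIndex _ _ h, covolume_span_eq_latDet,
    covolume_span_eq_latDet, div_mul_cancel₀ _ (latDet_pos B).ne']

end Lattice

theorem stmt5_general {n : ℕ} (K : Set (Fin n → ℝ)) (hK : IsBody K)
    (b cbar : Fin n → (Fin n → ℝ)) (hb : LinearIndependent ℝ b)
    (hcbar : LinearIndependent ℝ cbar)
    (hsub : lat cbar ⊆ lat b)
    (m : ℕ) (hm : (m : ℝ) * latDet b < latDet cbar)
    (hvol : (m : ℝ) * latDet b ≤
      (volume (((2⁻¹ : ℝ) • K + lat cbar) ∩ fundPar cbar)).toReal) :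
    ∃ T : Finset (Fin n → ℝ), (T : Set (Fin n → ℝ)) ⊆ K ∩ lat b ∧ m + 1 ≤ T.card ∧
      ∀ x ∈ T, ∀ y ∈ T, x ≠ y → x - y ∉ lat cbar := by
  obtain ⟨hK_compact, hK_convex, hK_symm, hK_int⟩ := hK
  obtain ⟨B, rfl⟩ := exists_basis_coe_eq hb
  obtain ⟨B', rfl⟩ := exists_basis_coe_eq hcbar
  have h_index := relIndex_mul_latDet (B := B) (B' := B') hsub
  have : Countable (span ℤ (range B')).toAddSubgroup :=
    (inferInstance : Countable (span ℤ (range B')))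
  refine exists_finset_card_gt_of_mul_measure_le (Λ := (span ℤ (range B)).toAddSubgroup)
    (Λ' := (span ℤ (range B')).toAddSubgroup) hsub AddSubgroup.isClosed_of_discrete
    (ZSpan.isAddFundamentalDomain B' volume)
    (ZSpan.fundamentalDomain_isBounded B').measure_lt_top.ne hK_compact hK_convex hK_symm
    (hK_int.mono interior_subset) ?_ ?_
  · rw [← h_index] at hm
    exact_mod_cast lt_of_mul_lt_mul_right hm (latDet_pos B).le
  · rw [fundPar_eq_fundamentalDomain] at hvol
    rw [ZSpan.volume_fundamentalDomain, ← latDet, ← h_index, ENNReal.ofReal_mul (by positivity),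
      ENNReal.ofReal_natCast, mul_left_comm]
    gcongr
    rw [← ENNReal.ofReal_natCast, ← ENNReal.ofReal_mul (by positivity)]
    exact ENNReal.ofReal_le_of_le_toReal hvol

/-- the torus version of van der Corput's theorem. -/
theorem stmt5 {n : ℕ} (K : Set (Fin n → ℝ)) (hK : IsBody K)
    (b cbar : Fin n → (Fin n → ℝ)) (hb : LinearIndependent ℝ b)
    (hcbar : LinearIndependent ℝ cbar)
    (hsub : lat cbar ⊆ lat b) (hne : lat cbar ≠ lat b)
    (m : ℕ) (hm : (m : ℝ) * latDet b < latDet cbar)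
    (hvol : (m : ℝ) * latDet b ≤
      (volume (((2⁻¹ : ℝ) • K + lat cbar) ∩ fundPar cbar)).toReal) :
    ∃ T : Finset (Fin n → ℝ), (T : Set (Fin n → ℝ)) ⊆ K ∩ lat b ∧ m + 1 ≤ T.card ∧
      ∀ x ∈ T, ∀ y ∈ T, x ≠ y → x - y ∉ lat cbar :=
  stmt5_general K hK b cbar hb hcbar hsub m hm hvol
end

section
/- Let K ⊂ ℝⁿ be a compact convex o-symmetric body with nonempty interior, Λ a full-rank lattice, and Λ' ⊆ Λ a sublattice of rank r ≤ n−1 with λ₁(K,Λ') ≥ λ₁(K,Λ) = 1. Then for every γ ≥ 1, the number of nonzero points of Λ' in γK is strictly less than γ^{n−1} · 3^{n−1} / λ₁(K,Λ'). -/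
open MeasureTheory Set Pointwise

/-! Reduce the coordinates of the points of `Λ'` modulo `m = ⌊2γ/λ₁⌋ + 1`. Two points of
`γK ∩ Λ'` with the same residues differ by `m z` with `z ∈ Λ' ∩ (2γ/m)K`, and `2γ/m < λ₁` forces
`z = 0`; so `γK ∩ Λ'` has at most `m^r ≤ (3γ/λ₁)^(n-1)` points, `0` among them. The residues
make sense because `λ₁ > 0` makes `Λ'` discrete, hence free of rank `r`. -/

section ConvexSymmetric

variable {E : Type*} [AddCommGroup E] [Module ℝ E] {K : Set E}

theorem Convex.zero_mem_interior_of_eq_neg [TopologicalSpace E] [IsTopologicalAddGroup E]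
    [ContinuousSMul ℝ E] (hconv : Convex ℝ K) (hsymm : K = -K) (hint : (interior K).Nonempty) :
    (0 : E) ∈ interior K := by
  obtain ⟨w, hw⟩ := hint
  have hw' : -w ∈ K := by
    rw [hsymm]
    simpa using interior_subset hw
  simpa using hconv.combo_interior_self_mem_interior hw hw' (a := 1 / 2) (b := 1 / 2)
    (by norm_num) (by norm_num) (by norm_num)

theorem Convex.sub_mem_add_smul_of_eq_neg (hconv : Convex ℝ K) (hsymm : K = -K) {a b : ℝ}
    (ha : 0 ≤ a) (hb : 0 ≤ b) {x y : E} (hx : x ∈ a • K) (hy : y ∈ b • K) :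
    x - y ∈ (a + b) • K := by
  have hy' : -y ∈ b • K := by
    rw [hsymm, Set.smul_set_neg]
    exact Set.neg_mem_neg.mpr hy
  rw [hconv.add_smul ha hb, sub_eq_add_neg]
  exact Set.add_mem_add hx hy'

end ConvexSymmetric

theorem Module.Basis.exists_nsmul_eq_of_cast_repr_eq_zero {ι M : Type*} [Fintype ι]
    [AddCommGroup M] (v : Module.Basis ι ℤ M) {m : ℕ} {w : M}
    (hw : ∀ i, ((v.repr w i : ℤ) : ZMod m) = 0) : ∃ z, m • z = w := by
  choose c hc using fun i ↦ (ZMod.intCast_zmod_eq_zero_iff_dvd _ m).mp (hw i)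
  refine ⟨v.equivFun.symm c, ?_⟩
  rw [← map_nsmul, ← v.equivFun.symm_apply_apply w]
  congr 1
  ext i
  simp [hc i]

theorem encard_le_pow_finrank_of_nsmul_eq_sub {M : Type*} [AddCommGroup M] [Module.Free ℤ M]
    [Module.Finite ℤ M] (m : ℕ) [NeZero m] (T : Set M)
    (hT : ∀ x ∈ T, ∀ y ∈ T, ∀ z, m • z = x - y → x = y) :
    T.encard ≤ m ^ Module.finrank ℤ M := by
  let v := Module.Free.chooseBasis ℤ M
  let f : M → Module.Free.ChooseBasisIndex ℤ M → ZMod m := fun x i ↦ (v.repr x i : ZMod m)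
  have hf : Set.InjOn f T := by
    intro x hx y hy hxy
    obtain ⟨z, hz⟩ := v.exists_nsmul_eq_of_cast_repr_eq_zero (w := x - y) fun i ↦ by
      simpa [sub_eq_zero] using congrFun hxy i
    exact hT x hx y hy z hz
  calc T.encard = (f '' T).encard := hf.encard_image.symm
    _ ≤ (Set.univ : Set (Module.Free.ChooseBasisIndex ℤ M → ZMod m)).encard :=
      Set.encard_le_encard (Set.subset_univ _)
    _ = m ^ Module.finrank ℤ M := by
      simp [Set.encard_univ, Module.finrank_eq_card_chooseBasisIndex]

theorem Submodule.finrank_int_eq_finrank_span {E : Type*} [NormedAddCommGroup E]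
    [NormedSpace ℝ E] [FiniteDimensional ℝ E] (M : Submodule ℤ E) [DiscreteTopology M] :
    Module.finrank ℤ M = Module.finrank ℝ (Submodule.span ℝ (M : Set E)) := by
  have h := Real.finrank_eq_int_finrank_of_discrete (s := (M : Set E))
    (by rwa [Submodule.span_eq])
  rw [Set.finrank, Set.finrank, Submodule.span_eq] at h
  exact h.symm

section Minimum

variable {n : ℕ} {K : Set (Fin n → ℝ)}

theorem lambda1_le {S : Set (Fin n → ℝ)} {l : ℝ} (hl : 0 ≤ l) {x : Fin n → ℝ} (hxS : x ∈ S)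
    (hx : x ≠ 0) (hxK : x ∈ l • K) : lambda1 K S ≤ l :=
  csInf_le ⟨0, fun _ h ↦ h.1⟩ ⟨hl, x, hxS, hx, hxK⟩

theorem discreteTopology_of_pos_lambda1 (hK : (0 : Fin n → ℝ) ∈ interior K)
    (M : Submodule ℤ (Fin n → ℝ)) (hM : 0 < lambda1 K M) : DiscreteTopology M := by
  set c := lambda1 K M / 2
  have hc : 0 < c := half_pos hM
  have hcM : c < lambda1 K M := half_lt_self hM
  rw [discreteTopology_iff_isOpen_singleton_zero, isOpen_induced_iff]
  refine ⟨c • interior K, isOpen_interior.smul₀ hc.ne', ?_⟩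
  ext x
  simp only [Set.mem_preimage, Set.mem_singleton_iff]
  constructor
  · intro hx
    by_contra hx0
    have := lambda1_le hc.le x.2 (by simpa using hx0) (Set.smul_set_mono interior_subset hx)
    linarith
  · rintro rfl
    exact ⟨0, hK, smul_zero c⟩

theorem ncard_smul_inter_diff_zero_lt_pow (hconv : Convex ℝ K) (hsymm : K = -K)
    (h0 : (0 : Fin n → ℝ) ∈ K) (M : Submodule ℤ (Fin n → ℝ)) [Module.Free ℤ M]
    [Module.Finite ℤ M] {γ : ℝ} (hγ : 0 ≤ γ) (m : ℕ) [NeZero m]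
    (hm : 2 * γ / m < lambda1 K M) :
    ((γ • K ∩ M) \ {0}).ncard < m ^ Module.finrank ℤ M := by
  set T := γ • K ∩ (M : Set (Fin n → ℝ))
  have hmpos : (0 : ℝ) < m := Nat.cast_pos.mpr (NeZero.pos m)
  have hTM : Subtype.val '' (Subtype.val ⁻¹' T : Set M) = T :=
    Set.image_preimage_eq_of_subset fun x hx ↦ ⟨⟨x, hx.2⟩, rfl⟩
  have hT : T.encard ≤ m ^ Module.finrank ℤ M := by
    rw [← hTM, Subtype.val_injective.encard_image]
    refine encard_le_pow_finrank_of_nsmul_eq_sub m _ fun x hx y hy z hz ↦ ?_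
    by_contra hxy
    have hz0 : z ≠ 0 := by
      rintro rfl
      exact hxy (sub_eq_zero.mp (by simpa using hz.symm))
    have hzK : (z : Fin n → ℝ) ∈ (2 * γ / m) • K := by
      have hxy' := hconv.sub_mem_add_smul_of_eq_neg hsymm hγ hγ hx.1 hy.1
      have hzxy : (z : Fin n → ℝ) = (m : ℝ)⁻¹ • ((x : Fin n → ℝ) - y) := by
        rw [← Submodule.coe_sub, ← hz, Submodule.coe_smul_of_tower, ← Nat.cast_smul_eq_nsmul ℝ,
          smul_smul, inv_mul_cancel₀ hmpos.ne', one_smul]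
      rw [hzxy, div_eq_inv_mul, mul_smul, two_mul]
      exact Set.smul_mem_smul_set hxy'
    linarith [lambda1_le (by positivity) z.2 (by simpa using hz0) hzK]
  have hTfin : T.Finite := Set.finite_of_encard_le_coe hT
  have h0T : (0 : Fin n → ℝ) ∈ T := ⟨⟨0, h0, smul_zero γ⟩, M.zero_mem⟩
  have hcard : T.ncard ≤ m ^ Module.finrank ℤ M := by
    rw [← ENat.natCast_le_natCast, hTfin.cast_ncard_eq]
    exact_mod_cast hT
  have := Set.ncard_sdiff_singleton_add_one h0T hTfin
  omega

theorem ncard_smul_inter_diff_zero_lt_three_mul_div_pow (hconv : Convex ℝ K) (hsymm : K = -K)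
    (h0 : (0 : Fin n → ℝ) ∈ K) (M : Submodule ℤ (Fin n → ℝ)) [Module.Free ℤ M]
    [Module.Finite ℤ M] (hM : 0 < lambda1 K M) {γ : ℝ} (hγ : lambda1 K M ≤ γ) :
    (((γ • K ∩ M) \ {0}).ncard : ℝ) < (3 * γ / lambda1 K M) ^ Module.finrank ℤ M := by
  set lam := lambda1 K M
  have hγ0 : 0 < γ := hM.trans_le hγ
  have hγlam : 1 ≤ γ / lam := (one_le_div hM).mpr hγ
  obtain ⟨m, hm, hm3⟩ : ∃ m : ℕ, 2 * γ / lam < m ∧ (m : ℝ) ≤ 3 * γ / lam := by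
    refine ⟨⌊2 * γ / lam⌋₊ + 1, by push_cast; exact Nat.lt_floor_add_one _, ?_⟩
    have := Nat.floor_le (show 0 ≤ 2 * γ / lam by positivity)
    push_cast
    linarith [show 3 * γ / lam = 2 * γ / lam + γ / lam by ring]
  have hm0 : (0 : ℝ) < m := lt_trans (by positivity) hm
  have : NeZero m := ⟨by exact_mod_cast hm0.ne'⟩
  have hcount := ncard_smul_inter_diff_zero_lt_pow hconv hsymm h0 M (by linarith) m
    (div_lt_comm₀ hM hm0 |>.mp hm)
  calc (((γ • K ∩ M) \ {0}).ncard : ℝ) < (m : ℝ) ^ Module.finrank ℤ M := by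
        exact_mod_cast hcount
    _ ≤ (3 * γ / lam) ^ Module.finrank ℤ M := pow_le_pow_left₀ hm0.le hm3 _

end Minimum

theorem stmt16_general {n : ℕ} (K : Set (Fin n → ℝ)) (hK : IsBody K)
    (L' : AddSubgroup (Fin n → ℝ))
    (hrk : Module.finrank ℝ (Submodule.span ℝ (L' : Set (Fin n → ℝ))) ≤ n - 1)
    (h1' : 1 ≤ lambda1 K (L' : Set (Fin n → ℝ)))
    (γ : ℝ) (hγ : 1 ≤ γ) :
    (((γ • K ∩ (L' : Set (Fin n → ℝ))) \ {0}).ncard : ℝ) <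
      γ ^ (n - 1) * 3 ^ (n - 1) / lambda1 K (L' : Set (Fin n → ℝ)) := by
  obtain ⟨-, hconv, hsymm, hint⟩ := hK
  set lam := lambda1 K (L' : Set (Fin n → ℝ))
  have hlam : 0 < lam := one_pos.trans_le h1'
  set S := (γ • K ∩ (L' : Set (Fin n → ℝ))) \ {0}
  obtain hS | ⟨x, ⟨hxK, hxL⟩, hx0⟩ := S.eq_empty_or_nonempty
  · rw [hS, Set.ncard_empty, Nat.cast_zero]
    positivity
  replace hx0 : x ≠ 0 := hx0
  have hlamγ : lam ≤ γ := lambda1_le (by linarith) hxL hx0 hxK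
  have h0 : (0 : Fin n → ℝ) ∈ interior K := hconv.zero_mem_interior_of_eq_neg hsymm hint
  let M := L'.toIntSubmodule
  have : DiscreteTopology M := discreteTopology_of_pos_lambda1 h0 M hlam
  have hs : Module.finrank ℤ M ≤ n - 1 := M.finrank_int_eq_finrank_span.trans_le hrk
  have hs1 : 1 ≤ Module.finrank ℤ M := by
    have : Nontrivial M := nontrivial_of_ne ⟨x, hxL⟩ 0 fun h ↦ hx0 (congrArg Subtype.val h)
    exact Module.finrank_pos
  have h3 : 1 ≤ 3 * γ / lam := by
    rw [le_div_iff₀ hlam]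
    linarith
  calc (S.ncard : ℝ) < (3 * γ / lam) ^ Module.finrank ℤ M :=
        ncard_smul_inter_diff_zero_lt_three_mul_div_pow hconv hsymm (interior_subset h0) M hlam
          hlamγ
    _ ≤ (3 * γ / lam) ^ (n - 1) := pow_le_pow_right₀ h3 hs
    _ = γ ^ (n - 1) * 3 ^ (n - 1) / lam ^ (n - 1) := by rw [div_pow, mul_pow, mul_comm]
    _ ≤ γ ^ (n - 1) * 3 ^ (n - 1) / lam :=
      div_le_div_of_nonneg_left (by positivity) hlam (le_self_pow₀ h1' (by omega))

/-- counting nonzero points of a lower-rank sublattice in `γK`. -/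
theorem stmt16 {n : ℕ} (K : Set (Fin n → ℝ)) (hK : IsBody K)
    (b : Fin n → (Fin n → ℝ)) (hb : LinearIndependent ℝ b)
    (L' : AddSubgroup (Fin n → ℝ)) (hsub : (L' : Set (Fin n → ℝ)) ⊆ lat b)
    (hrk : Module.finrank ℝ (Submodule.span ℝ (L' : Set (Fin n → ℝ))) ≤ n - 1)
    (h1 : lambda1 K (lat b) = 1) (h1' : 1 ≤ lambda1 K (L' : Set (Fin n → ℝ)))
    (γ : ℝ) (hγ : 1 ≤ γ) :
    (((γ • K ∩ (L' : Set (Fin n → ℝ))) \ {0}).ncard : ℝ) <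
      γ ^ (n - 1) * 3 ^ (n - 1) / lambda1 K (L' : Set (Fin n → ℝ)) :=
  stmt16_general K hK L' hrk h1' γ hγ
end
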